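/- Let P ⊂ ℝ² be an open parallelogram containing at least one unit-length segment and let c : P → Fin 2 be measurable. Then p^table(c) ≥ 1/3 − 2 · Area(K(P,1)) / Area(P), where K(P,1) = {z ∈ P : dist(z, ℝ² \ P) < 1}. -/

import Mathlib

open MeasureTheory Real

noncomputable section

abbrev Plane := EuclideanSpace ℝ (Fin 2)

def vec (x y : ℝ) : Plane := (WithLp.equiv 2 (Fin 2 → ℝ)).symm ![x, y]

def dir (θ : ℝ) : Plane := vec (Real.cos θ) (Real.sin θ)

/-- The fundamental parallelogram `{t•u + s•v : 0 ≤ t, s < 1}`. -/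
def para (u v : Plane) : Set Plane :=
  {x | ∃ t s : ℝ, 0 ≤ t ∧ t < 1 ∧ 0 ≤ s ∧ s < 1 ∧ x = t • u + s • v}

/-- `p^per(c)` for a periodic coloring with fundamental parallelogram `para u v`. -/
def pper {k : ℕ} (c : Plane → Fin k) (u v : Plane) : ℝ :=
  (1 / (2 * π * (volume (para u v)).toReal)) *
    ∫ a in para u v, ∫ θ in (0:ℝ)..(2*π),
      (if c a = c (a + dir θ) then (1:ℝ) else 0)

/-- The square `[-R, R]²`. -/
def square (R : ℝ) : Set Plane := {x | x 0 ∈ Set.Icc (-R) R ∧ x 1 ∈ Set.Icc (-R) R}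

-- `p^table(c)` on the "table" `P`: the conditional probability that both endpoints of a
-- random needle have the same color, given that the second endpoint also lands in `P`.
open Classical in
def ptableSet {k : ℕ} (c : Plane → Fin k) (P : Set Plane) : ℝ :=
  (∫ a in P, ∫ θ in (0:ℝ)..(2*π),
      (if c a = c (a + dir θ) ∧ a + dir θ ∈ P then (1:ℝ) else 0)) /
  (∫ a in P, ∫ θ in (0:ℝ)..(2*π), (if a + dir θ ∈ P then (1:ℝ) else 0))

/-- `p^table_R(c)`, on the square table `[-R, R]²`. -/
def ptable {k : ℕ} (c : Plane → Fin k) (R : ℝ) : ℝ := ptableSet c (square R)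

/-- The open parallelogram `{t•u + s•v : 0 < t, s < 1}`. -/
def paraOpen (u v : Plane) : Set Plane :=
  {x | ∃ t s : ℝ, 0 < t ∧ t < 1 ∧ 0 < s ∧ s < 1 ∧ x = t • u + s • v}

/-- `K(P, r)`: the `r`-wide inner border of `P`. -/
def innerBorder (P : Set Plane) (r : ℝ) : Set Plane :=
  {z ∈ P | Metric.infDist z Pᶜ < r}


open Metric Set Topology

/-!
A needle is a foot `a ∈ ℝ²` together with an angle `θ ∈ ℝ/2πℤ`; Lebesgue measure on needles is
invariant under rotating a needle about its foot and under sliding it to start at its tip.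
Two of the three vertices of an equilateral unit triangle have the same colour, and each side is
the image of the first one under such maps, so the measure `T` of these triangles lying in `P` is
at most `3N`, where `N` is the measure of monochromatic needles in `P`. If a needle lies in `P` and
both its endpoints lie outside `K = K(P, 1)`, then by convexity its midpoint is at distance `≥ 1`
from `ℝ² \ P`, and the third vertex, at distance `√3/2` from the midpoint, lies in `P`; hence the
measure `D` of needles in `P` satisfies `D ≤ T + 4π|K|`. Conversely a needle with foot in `P \ K`
lies in `P` (up to the null level set `{dist(·, ℝ² \ P) = 1}`), so `2π(|P| - |K|) ≤ D`. Since
`p^table(c) = N / D`, these three inequalities give the bound.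
-/

section InnerParallel

variable {E : Type*} [NormedAddCommGroup E] [NormedSpace ℝ E]

lemma Convex.setOf_le_infDist_compl {P : Set E} (hP : Convex ℝ P) (r : ℝ) :
    Convex ℝ {z ∈ P | r ≤ infDist z Pᶜ} := by
  intro x hx y hy p q hp hq hpq
  refine ⟨hP hx.1 hy.1 hp hq hpq, ?_⟩
  rcases Pᶜ.eq_empty_or_nonempty with h | h
  · simpa [h] using hx.2
  rw [le_infDist h]
  intro w hw
  set d := w - (p • x + q • y)
  -- if both translates by `d` stayed in `P`, so would their combination `w`
  have hout : x + d ∉ P ∨ y + d ∉ P := by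
    by_contra! hin
    apply hw
    convert hP hin.1 hin.2 hp hq hpq using 1
    linear_combination (norm := module) (-hpq) • d
  have hd : dist (p • x + q • y) w = ‖d‖ := by rw [dist_comm, dist_eq_norm]
  rcases hout with h' | h'
  · exact hx.2.trans ((infDist_le_dist_of_mem h').trans_eq (by rw [hd, dist_self_add_right]))
  · exact hy.2.trans ((infDist_le_dist_of_mem h').trans_eq (by rw [hd, dist_self_add_right]))

lemma IsOpen.measure_setOf_infDist_compl_eq [FiniteDimensional ℝ E] [MeasurableSpace E]
    [BorelSpace E] (μ : Measure E) [μ.IsAddHaarMeasure] {P : Set E} (hPo : IsOpen P)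
    (hPc : Convex ℝ P) {r : ℝ} (hr : 0 < r) :
    μ {z ∈ P | infDist z Pᶜ = r} = 0 := by
  refine measure_mono_null (fun z hz => ?_) ((hPc.setOf_le_infDist_compl r).addHaar_frontier μ)
  obtain ⟨hzP, hzr⟩ := hz
  rcases Pᶜ.eq_empty_or_nonempty with h | hne
  · simp [h] at hzr; linarith
  obtain ⟨y, hy, hzy⟩ := hPo.isClosed_compl.exists_infDist_eq_dist hne z
  rw [frontier_eq_closure_inter_closure]
  refine ⟨subset_closure ⟨hzP, hzr.ge⟩, ?_⟩
  -- moving from `z` towards its nearest point `y` of `Pᶜ` strictly decreases the distance to `Pᶜ`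
  have hlim : Filter.Tendsto (fun t : ℝ => z + t • (y - z)) (𝓝[>] 0) (𝓝 z) := by
    have : Continuous fun t : ℝ => z + t • (y - z) := by fun_prop
    simpa using this.continuousWithinAt.tendsto (x := 0) (s := Ioi 0)
  refine mem_closure_of_tendsto hlim ?_
  filter_upwards [Ioo_mem_nhdsGT one_pos] with t ht hC
  have hdist : dist (z + t • (y - z)) y = (1 - t) * r := by
    rw [← hzr, hzy, dist_eq_norm, dist_eq_norm,
      show z + t • (y - z) - y = (1 - t) • (z - y) by module, norm_smul,
      Real.norm_of_nonneg (by linarith [ht.2])]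
  have := hC.2.trans ((infDist_le_dist_of_mem hy).trans_eq hdist)
  nlinarith [ht.1]

end InnerParallel

instance fact_two_pi_pos : Fact (0 < 2 * π) := ⟨Real.two_pi_pos⟩

lemma periodic_dir : Function.Periodic dir (2 * π) := fun θ => by
  simp [dir, Real.cos_add_two_pi, Real.sin_add_two_pi]

lemma continuous_dir : Continuous dir := (PiLp.continuous_toLp 2 _).comp (by fun_prop)

lemma norm_dir (θ : ℝ) : ‖dir θ‖ = 1 := by
  simp [dir, vec, EuclideanSpace.norm_eq]

lemma dir_add_pi_div_three (θ : ℝ) : dir (θ + π / 3) = dir θ + dir (θ + 2 * π / 3) := by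
  have h : θ + 2 * π / 3 = (θ + π / 3) + π / 3 := by ring
  ext i
  fin_cases i <;> simp [dir, vec, h, Real.cos_add, Real.sin_add] <;> ring_nf <;>
    simp [Real.sq_sqrt] <;> ring

lemma norm_dir_add_pi_div_three_sub_half_lt_one (θ : ℝ) :
    ‖dir (θ + π / 3) - (1 / 2 : ℝ) • dir θ‖ < 1 := by
  have h : dir (θ + π / 3) - (1 / 2 : ℝ) • dir θ = (√3 / 2) • dir (θ + π / 2) := by
    ext i
    fin_cases i <;> simp [dir, vec, Real.cos_add, Real.sin_add] <;> ring
  have h3 : √3 < 2 := by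
    rw [Real.sqrt_lt' two_pos]; norm_num
  rw [h, norm_smul, norm_dir, mul_one, Real.norm_of_nonneg (by positivity)]
  linarith

def circleDir : AddCircle (2 * π) → Plane := periodic_dir.lift

@[simp] lemma circleDir_coe (θ : ℝ) : circleDir θ = dir θ := periodic_dir.lift_coe θ

lemma continuous_circleDir : Continuous circleDir :=
  continuous_quot_lift _ continuous_dir

abbrev Needle := Plane × AddCircle (2 * π)

namespace Needle

def tip (q : Needle) : Plane := q.1 + circleDir q.2

def rotate (s : ℝ) (q : Needle) : Needle := (q.1, q.2 + s)

def slide (q : Needle) : Needle := (q.tip, q.2)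

lemma measurable_tip : Measurable tip :=
  (continuous_fst.add (continuous_circleDir.comp continuous_snd)).measurable

lemma dist_tip (q : Needle) : dist q.1 q.tip = 1 := by
  obtain ⟨a, θ⟩ := q
  induction θ using QuotientAddGroup.induction_on with
  | H θ => simp [tip, norm_dir]

lemma dist_midpoint_tip_rotate_lt_one (q : Needle) :
    dist ((1 / 2 : ℝ) • q.1 + (1 / 2 : ℝ) • q.tip) (q.rotate (π / 3)).tip < 1 := by
  obtain ⟨a, θ⟩ := q
  induction θ using QuotientAddGroup.induction_on with
  | H θ =>
    simp only [tip, rotate, ← QuotientAddGroup.mk_add, circleDir_coe]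
    rw [dist_comm, dist_eq_norm,
      show a + dir (θ + π / 3) - ((1 / 2 : ℝ) • a + (1 / 2 : ℝ) • (a + dir θ)) =
        dir (θ + π / 3) - (1 / 2 : ℝ) • dir θ by module]
    exact norm_dir_add_pi_div_three_sub_half_lt_one θ

lemma tip_rotate_two_pi_div_three_slide (q : Needle) :
    (q.slide.rotate (2 * π / 3)).tip = (q.rotate (π / 3)).tip := by
  obtain ⟨a, θ⟩ := q
  induction θ using QuotientAddGroup.induction_on with
  | H θ =>
    simp only [tip, rotate, slide, ← QuotientAddGroup.mk_add, circleDir_coe]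
    rw [add_assoc, ← dir_add_pi_div_three]

lemma measurePreserving_rotate (s : ℝ) : MeasurePreserving (rotate s) :=
  (MeasurePreserving.id volume).prod (measurePreserving_add_right volume _)

lemma measurable_slide : Measurable slide := measurable_tip.prodMk measurable_snd

lemma measurePreserving_slide : MeasurePreserving slide := by
  refine ⟨measurable_slide, Measure.ext fun S hS => ?_⟩
  rw [Measure.map_apply measurable_slide hS, Measure.volume_eq_prod,
    Measure.prod_apply_symm hS, Measure.prod_apply_symm (measurable_slide hS)]
  congr 1 with θ
  exact measure_preimage_add_right volume (circleDir θ) ((fun x => (x, θ)) ⁻¹' S)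

lemma volume_fst_preimage (S : Set Plane) :
    volume (Prod.fst ⁻¹' S : Set Needle) = volume S * ENNReal.ofReal (2 * π) := by
  rw [← Set.prod_univ, Measure.volume_eq_prod, Measure.prod_prod, AddCircle.measure_univ]

end Needle

open Needle

section Events

variable (P : Set Plane)

def needlesIn : Set Needle := {q | q.1 ∈ P ∧ q.tip ∈ P}

def monochromeNeedlesIn {k : ℕ} (c : Plane → Fin k) : Set Needle :=
  {q ∈ needlesIn P | c q.1 = c q.tip}

/-- Needles `q` such that the equilateral triangle with sides `q` and `q.rotate (π / 3)` has all
its vertices in `P`. -/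
def trianglesIn : Set Needle := {q ∈ needlesIn P | (q.rotate (π / 3)).tip ∈ P}

variable {P}

lemma needlesIn_subset_fst_preimage : needlesIn P ⊆ Prod.fst ⁻¹' P := fun _ hq => hq.1

lemma measurableSet_needlesIn (hP : MeasurableSet P) : MeasurableSet (needlesIn P) :=
  (measurable_fst hP).inter (measurable_tip hP)

lemma measurableSet_monochromeNeedlesIn (hP : MeasurableSet P) {k : ℕ} {c : Plane → Fin k}
    (hc : Measurable c) : MeasurableSet (monochromeNeedlesIn P c) :=
  (measurableSet_needlesIn hP).inter
    (measurableSet_eq_fun (hc.comp measurable_fst) (hc.comp measurable_tip))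

lemma measurableSet_innerBorder (hP : MeasurableSet P) (r : ℝ) :
    MeasurableSet (innerBorder P r) :=
  hP.inter (measurableSet_lt (continuous_infDist_pt _).measurable measurable_const)

lemma pigeonhole_fin_two (x y z : Fin 2) : x = y ∨ x = z ∨ y = z := by
  omega

lemma trianglesIn_subset (c : Plane → Fin 2) :
    trianglesIn P ⊆ monochromeNeedlesIn P c ∪ rotate (π / 3) ⁻¹' monochromeNeedlesIn P c ∪
      (rotate (2 * π / 3) ∘ slide) ⁻¹' monochromeNeedlesIn P c := by
  rintro q ⟨⟨ha, hb⟩, hw⟩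
  have hw' := tip_rotate_two_pi_div_three_slide q
  rcases pigeonhole_fin_two (c q.1) (c q.tip) (c (q.rotate (π / 3)).tip) with h | h | h
  · exact Or.inl (Or.inl ⟨⟨ha, hb⟩, h⟩)
  · exact Or.inl (Or.inr ⟨⟨ha, hw⟩, h⟩)
  · refine Or.inr ⟨⟨hb, ?_⟩, ?_⟩ <;> rwa [Function.comp_apply, hw']

lemma volume_trianglesIn_le (hP : MeasurableSet P) {c : Plane → Fin 2} (hc : Measurable c) :
    volume (trianglesIn P) ≤ 3 * volume (monochromeNeedlesIn P c) := by
  have hM := (measurableSet_monochromeNeedlesIn hP hc).nullMeasurableSet (μ := volume)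
  calc volume (trianglesIn P)
      ≤ volume (monochromeNeedlesIn P c) + volume (rotate (π / 3) ⁻¹' monochromeNeedlesIn P c) +
          volume ((rotate (2 * π / 3) ∘ slide) ⁻¹' monochromeNeedlesIn P c) :=
        (measure_mono (trianglesIn_subset c)).trans
          ((measure_union_le _ _).trans (by gcongr; exact measure_union_le _ _))
    _ = 3 * volume (monochromeNeedlesIn P c) := by
        rw [(measurePreserving_rotate _).measure_preimage hM,
          ((measurePreserving_rotate _).comp measurePreserving_slide).measure_preimage hM]
        ring

lemma needlesIn_subset (hP : Convex ℝ P) :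
    needlesIn P ⊆ trianglesIn P ∪ Prod.fst ⁻¹' innerBorder P 1 ∪
      slide ⁻¹' (Prod.fst ⁻¹' innerBorder P 1) := by
  rintro q ⟨ha, hb⟩
  by_cases hka : infDist q.1 Pᶜ < 1
  · exact Or.inl (Or.inr ⟨ha, hka⟩)
  by_cases hkb : infDist q.tip Pᶜ < 1
  · exact Or.inr ⟨hb, hkb⟩
  have hmid : (1 / 2 : ℝ) • q.1 + (1 / 2 : ℝ) • q.tip ∈ {z ∈ P | 1 ≤ infDist z Pᶜ} :=
    hP.setOf_le_infDist_compl 1 ⟨ha, not_lt.1 hka⟩ ⟨hb, not_lt.1 hkb⟩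
      (by norm_num) (by norm_num) (by norm_num)
  refine Or.inl (Or.inl ⟨⟨ha, hb⟩, ?_⟩)
  exact not_not.1
    (notMem_of_dist_lt_infDist ((dist_midpoint_tip_rotate_lt_one q).trans_le hmid.2))

lemma volume_needlesIn_le (hPm : MeasurableSet P) (hPc : Convex ℝ P) :
    volume (needlesIn P) ≤
      volume (trianglesIn P) + 2 * (volume (innerBorder P 1) * ENNReal.ofReal (2 * π)) := by
  have hK := measurableSet_innerBorder hPm 1
  calc volume (needlesIn P)
      ≤ volume (trianglesIn P) + volume (Prod.fst ⁻¹' innerBorder P 1 : Set Needle) +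
          volume (slide ⁻¹' (Prod.fst ⁻¹' innerBorder P 1)) :=
        (measure_mono (needlesIn_subset hPc)).trans
          ((measure_union_le _ _).trans (by gcongr; exact measure_union_le _ _))
    _ = _ := by
        rw [measurePreserving_slide.measure_preimage (measurable_fst hK).nullMeasurableSet,
          volume_fst_preimage]
        ring

lemma fst_preimage_subset :
    (Prod.fst ⁻¹' P : Set Needle) ⊆ needlesIn P ∪ Prod.fst ⁻¹' innerBorder P 1 ∪
      Prod.fst ⁻¹' {z ∈ P | infDist z Pᶜ = 1} := by
  intro q ha
  rcases lt_trichotomy (infDist q.1 Pᶜ) 1 with h | h | h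
  · exact Or.inl (Or.inr ⟨ha, h⟩)
  · exact Or.inr ⟨ha, h⟩
  · have := notMem_of_dist_lt_infDist ((dist_tip q).trans_lt h)
    exact Or.inl (Or.inl ⟨ha, by simpa using this⟩)

lemma volume_le_volume_needlesIn (hPo : IsOpen P) (hPc : Convex ℝ P) :
    volume P * ENNReal.ofReal (2 * π) ≤
      volume (needlesIn P) + volume (innerBorder P 1) * ENNReal.ofReal (2 * π) := by
  have hL := hPo.measure_setOf_infDist_compl_eq volume hPc one_pos
  rw [← volume_fst_preimage, ← volume_fst_preimage]
  calc volume (Prod.fst ⁻¹' P : Set Needle)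
      ≤ volume (needlesIn P) + volume (Prod.fst ⁻¹' innerBorder P 1 : Set Needle) +
          volume (Prod.fst ⁻¹' {z ∈ P | infDist z Pᶜ = 1} : Set Needle) :=
        (measure_mono fst_preimage_subset).trans
          ((measure_union_le _ _).trans (by gcongr; exact measure_union_le _ _))
    _ = _ := by rw [volume_fst_preimage {z ∈ P | infDist z Pᶜ = 1}, hL, zero_mul, add_zero]

end Events

lemma intervalIntegral_ite_eq_volume {p : ℝ → Prop} [DecidablePred p]
    {S : Set (AddCircle (2 * π))} (hS : MeasurableSet S)
    (hp : ∀ θ : ℝ, p θ ↔ (θ : AddCircle (2 * π)) ∈ S) :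
    ∫ θ in (0 : ℝ)..(2 * π), (if p θ then (1 : ℝ) else 0) = (volume S).toReal := by
  have hmk := AddCircle.measurePreserving_mk (2 * π) 0
  rw [zero_add] at hmk
  rw [intervalIntegral.integral_of_le Real.two_pi_pos.le,
    ← hmk.measure_preimage hS.nullMeasurableSet, ← measureReal_def,
    ← integral_indicator_one (measurableSet_preimage hmk.measurable hS)]
  refine integral_congr_ae (ae_of_all _ fun θ => ?_)
  beta_reduce
  by_cases h : p θ
  · rw [if_pos h, Set.indicator_of_mem (s := QuotientAddGroup.mk ⁻¹' S) ((hp θ).1 h),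
      Pi.one_apply]
  · rw [if_neg h, Set.indicator_of_notMem (s := QuotientAddGroup.mk ⁻¹' S) (mt (hp θ).2 h)]

lemma setIntegral_intervalIntegral_ite_eq_volume {P : Set Plane} (hP : MeasurableSet P)
    {E : Set Needle} (hE : MeasurableSet E) (hEP : E ⊆ Prod.fst ⁻¹' P)
    (p : Plane → ℝ → Prop) [∀ a θ, Decidable (p a θ)]
    (hp : ∀ a ∈ P, ∀ θ : ℝ, p a θ ↔ (a, (θ : AddCircle (2 * π))) ∈ E) :
    ∫ a in P, ∫ θ in (0 : ℝ)..(2 * π), (if p a θ then (1 : ℝ) else 0) = (volume E).toReal := by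
  calc ∫ a in P, ∫ θ in (0 : ℝ)..(2 * π), (if p a θ then (1 : ℝ) else 0)
      = ∫ a in P, (volume (Prod.mk a ⁻¹' E)).toReal :=
        setIntegral_congr_fun hP fun a ha =>
          intervalIntegral_ite_eq_volume (measurable_prodMk_left hE) (hp a ha)
    _ = (∫⁻ a in P, volume (Prod.mk a ⁻¹' E)).toReal :=
        integral_toReal (measurable_measure_prodMk_left hE).aemeasurable
          (ae_of_all _ fun _ => measure_lt_top _ _)
    _ = (volume E).toReal := by
        rw [← Measure.prod_apply hE,
          ← Measure.restrict_univ (μ := (volume : Measure (AddCircle (2 * π)))),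
          Measure.prod_restrict, Measure.restrict_apply hE, Set.prod_univ,
          Set.inter_eq_left.2 hEP, Measure.volume_eq_prod]

lemma ptableSet_eq_div {P : Set Plane} (hP : MeasurableSet P) {k : ℕ} {c : Plane → Fin k}
    (hc : Measurable c) :
    ptableSet c P =
      (volume (monochromeNeedlesIn P c)).toReal / (volume (needlesIn P)).toReal := by
  classical
  unfold ptableSet
  rw [setIntegral_intervalIntegral_ite_eq_volume hP (measurableSet_monochromeNeedlesIn hP hc)
      (fun q hq => hq.1.1) _ fun a ha θ => ?_,
    setIntegral_intervalIntegral_ite_eq_volume hP (measurableSet_needlesIn hP)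
      needlesIn_subset_fst_preimage _ fun a ha θ => ?_]
  · simp [needlesIn, tip, ha]
  · simp [monochromeNeedlesIn, needlesIn, tip, ha, and_comm]

lemma one_third_sub_le_div {N D A κ x : ℝ} (hN : 0 ≤ N) (hD : 0 ≤ D) (hA : 0 < A) (hκ : 0 ≤ κ)
    (hx : 0 < x) (hDN : D ≤ 3 * N + 2 * (κ * x)) (hAD : A * x ≤ D + κ * x) :
    1 / 3 - 2 * κ / A ≤ N / D := by
  rcases le_or_gt A (6 * κ) with hκA | hκA
  · have : 1 / 3 ≤ 2 * κ / A := by rw [le_div_iff₀ hA]; linarith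
    linarith [div_nonneg hN hD]
  have hxA : x * A ≤ 3 * D := by nlinarith
  have hDpos : 0 < D := by nlinarith
  calc 1 / 3 - 2 * κ / A ≤ 1 / 3 - 2 * κ * x / (3 * D) := by
        gcongr 1 / 3 - ?_
        rw [div_le_div_iff₀ (by positivity) hA]
        nlinarith
    _ = (D - 2 * (κ * x)) / (3 * D) := by field_simp
    _ ≤ N / D := by
        rw [div_le_div_iff₀ (by positivity) hDpos]
        nlinarith

theorem one_third_sub_le_ptableSet {P : Set Plane} (hPo : IsOpen P) (hPc : Convex ℝ P)
    (hPb : Bornology.IsBounded P) (hPne : P.Nonempty) {c : Plane → Fin 2} (hc : Measurable c) :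
    1 / 3 - 2 * (volume (innerBorder P 1)).toReal / (volume P).toReal ≤ ptableSet c P := by
  have hPm := hPo.measurableSet
  have hfinP : volume P ≠ ⊤ := hPb.measure_lt_top.ne
  have hfinK : volume (innerBorder P 1) ≠ ⊤ := measure_ne_top_of_subset (fun z hz => hz.1) hfinP
  have hfinD : volume (needlesIn P) ≠ ⊤ := by
    refine measure_ne_top_of_subset needlesIn_subset_fst_preimage ?_
    rw [volume_fst_preimage]
    finiteness
  have hfinN : volume (monochromeNeedlesIn P c) ≠ ⊤ :=
    measure_ne_top_of_subset (fun q hq => hq.1) hfinD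
  have hD : volume (needlesIn P) ≤ 3 * volume (monochromeNeedlesIn P c) +
      2 * (volume (innerBorder P 1) * ENNReal.ofReal (2 * π)) :=
    (volume_needlesIn_le hPm hPc).trans (by gcongr; exact volume_trianglesIn_le hPm hc)
  have hA := volume_le_volume_needlesIn hPo hPc
  rw [ptableSet_eq_div hPm hc]
  refine one_third_sub_le_div ENNReal.toReal_nonneg ENNReal.toReal_nonneg
    (ENNReal.toReal_pos (hPo.measure_pos volume hPne).ne' hfinP) ENNReal.toReal_nonneg
    Real.two_pi_pos ?_ ?_
  · have := ENNReal.toReal_mono (by finiteness) hD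
    rwa [ENNReal.toReal_add (by finiteness) (by finiteness), ENNReal.toReal_mul,
      ENNReal.toReal_mul, ENNReal.toReal_mul, ENNReal.toReal_ofReal Real.two_pi_pos.le] at this
  · have := ENNReal.toReal_mono (by finiteness) hA
    rwa [ENNReal.toReal_add (by finiteness) (by finiteness), ENNReal.toReal_mul,
      ENNReal.toReal_mul, ENNReal.toReal_ofReal Real.two_pi_pos.le] at this

def paraMap (u v : Plane) : ℝ × ℝ →ₗ[ℝ] Plane :=
  (LinearMap.toSpanSingleton ℝ Plane u).coprod (LinearMap.toSpanSingleton ℝ Plane v)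

lemma paraOpen_eq_image (u v : Plane) :
    paraOpen u v = paraMap u v '' Ioo 0 1 ×ˢ Ioo 0 1 := by
  ext x
  simp [paraOpen, paraMap, eq_comm, and_assoc]

lemma convex_paraOpen (u v : Plane) : Convex ℝ (paraOpen u v) := by
  rw [paraOpen_eq_image]
  exact ((convex_Ioo 0 1).prod (convex_Ioo 0 1)).linear_image _

lemma isBounded_paraOpen (u v : Plane) : Bornology.IsBounded (paraOpen u v) := by
  rw [paraOpen_eq_image]
  exact (LinearMap.toContinuousLinearMap (paraMap u v)).lipschitz.isBounded_image
    ((Metric.isBounded_Ioo 0 1).prod (Metric.isBounded_Ioo 0 1))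

lemma nonempty_paraOpen (u v : Plane) : (paraOpen u v).Nonempty := by
  rw [paraOpen_eq_image]
  exact ((nonempty_Ioo.2 one_pos).prod (nonempty_Ioo.2 one_pos)).image _

lemma isOpen_paraOpen {u v : Plane} (huv : LinearIndependent ℝ ![u, v]) :
    IsOpen (paraOpen u v) := by
  have hinj : Function.Injective (paraMap u v) := by
    rw [← LinearMap.ker_eq_bot, LinearMap.ker_eq_bot']
    rintro ⟨t, s⟩ h
    simpa using LinearIndependent.pair_iff.1 huv t s (by simpa [paraMap] using h)
  let e := (paraMap u v).linearEquivOfInjective hinj (by simp)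
  rw [paraOpen_eq_image]
  exact e.toContinuousLinearEquiv.isOpenMap _ (isOpen_Ioo.prod isOpen_Ioo)

theorem stmt16_general (u v : Plane) (huv : LinearIndependent ℝ ![u, v])
    (c : Plane → Fin 2) (hc : Measurable c) :
    1 / 3 - 2 * (volume (innerBorder (paraOpen u v) 1)).toReal /
        (volume (paraOpen u v)).toReal ≤ ptableSet c (paraOpen u v) :=
  one_third_sub_le_ptableSet (isOpen_paraOpen huv) (convex_paraOpen u v)
    (isBounded_paraOpen u v) (nonempty_paraOpen u v) hc

/-- With two colors on a finite table: `p^table(c) ≥ 1/3 − 2·Area(K(P,1))/Area(P)` for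
any measurable 2-coloring `c` of an open parallelogram `P` containing a unit segment. -/
theorem stmt16 (u v : Plane) (huv : LinearIndependent ℝ ![u, v])
    (hseg : ∃ a b : Plane, a ∈ paraOpen u v ∧ b ∈ paraOpen u v ∧ dist a b = 1)
    (c : Plane → Fin 2) (hc : Measurable c) :
    1 / 3 - 2 * (volume (innerBorder (paraOpen u v) 1)).toReal /
        (volume (paraOpen u v)).toReal ≤ ptableSet c (paraOpen u v) :=
  stmt16_general u v huv c hc

end
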